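/- For all integers d ≥ 2 and p ≥ 2, the staircase with landing E_{1,p,d} is brodable but not strongly brodable. -/

import Mathlib

/-!
Brodability: stitch the staircase cell by cell starting from its far end, walk back along the
landing on inferior diagonals, do the corner cell, and return along the landing on superior
diagonals. By counting, it is enough that every diagonal occurs, the inferior one first.

No closed embroidery: let `A`, `B`, `C` be the last three cells of the staircase. The only
diagonals with an endpoint adjacent to an endpoint of `sup A` are `inf A` and `inf B`; for
`inf A` they are `sup A` and `sup B`; for `inf B` they are `sup A`, `sup B` and `sup C`. In a
closed embroidery cyclically consecutive stitches have adjacent endpoints, so `sup B, inf A,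
sup A, inf B, sup C` are consecutive on the cycle (the reverse order would put `inf A` after
`sup A`). As `inf B` comes before `sup B`, the block wraps around the end of the sequence, and
then `inf C` finds no place before `sup C`.
-/

/-- Two vertices of `ℤ²` are adjacent if their Euclidean distance is `1`. -/
def Adj (u v : ℤ × ℤ) : Prop := (u.1 - v.1) ^ 2 + (u.2 - v.2) ^ 2 = 1

/-- The inferior diagonal of the cell `(a, b)`: the unordered pair `{(a,b), (a+1,b+1)}`. -/
def infDiag (c : ℤ × ℤ) : Sym2 (ℤ × ℤ) := s(c, (c.1 + 1, c.2 + 1))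

/-- The superior diagonal of the cell `(a, b)`: the unordered pair `{(a,b+1), (a+1,b)}`. -/
def supDiag (c : ℤ × ℤ) : Sym2 (ℤ × ℤ) := s((c.1, c.2 + 1), (c.1 + 1, c.2))

/-- The unordered pair underlying an ordered pair of vertices. -/
def diagOf (e : (ℤ × ℤ) × (ℤ × ℤ)) : Sym2 (ℤ × ℤ) := s(e.1, e.2)

/-- `d 0, d 1, …, d (2n - 1)` (with `n = C.card`) is an embroidery of the
configuration `C`. -/
def IsEmbroidery (C : Finset (ℤ × ℤ)) (d : ℕ → (ℤ × ℤ) × (ℤ × ℤ)) : Prop :=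
  (∀ i < 2 * C.card, ∃ c ∈ C, diagOf (d i) = infDiag c ∨ diagOf (d i) = supDiag c) ∧
  (∀ c ∈ C, ∃! i, i < 2 * C.card ∧ diagOf (d i) = infDiag c) ∧
  (∀ c ∈ C, ∃! i, i < 2 * C.card ∧ diagOf (d i) = supDiag c) ∧
  (∀ c ∈ C, ∀ i j, i < 2 * C.card → j < 2 * C.card →
    diagOf (d i) = infDiag c → diagOf (d j) = supDiag c → i < j) ∧
  (∀ i, i + 1 < 2 * C.card → Adj (d i).2 (d (i + 1)).1)

/-- A closed embroidery: moreover the end of the last diagonal is adjacent to the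
start of the first one. -/
def IsClosedEmbroidery (C : Finset (ℤ × ℤ)) (d : ℕ → (ℤ × ℤ) × (ℤ × ℤ)) : Prop :=
  IsEmbroidery C d ∧ Adj (d (2 * C.card - 1)).2 (d 0).1

/-- A configuration is brodable if it admits an embroidery. -/
def Brodable (C : Finset (ℤ × ℤ)) : Prop := ∃ d, IsEmbroidery C d

/-- A configuration is strongly brodable if it admits a closed embroidery. -/
def StronglyBrodable (C : Finset (ℤ × ℤ)) : Prop := ∃ d, IsClosedEmbroidery C d

/-- The staircase with landing `E_{g,p,d}`:
`{(i, −i) : 0 ≤ i ≤ g−1} ∪ {(g−1+j, −g) : 1 ≤ j ≤ p} ∪ {(g+p+k−1, −g−k) : 1 ≤ k ≤ d}`. -/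
def stairLanding (g p d : ℕ) : Finset (ℤ × ℤ) :=
  (Finset.range g).image (fun i : ℕ => ((i : ℤ), -(i : ℤ))) ∪
  (Finset.range p).image (fun j : ℕ => ((g : ℤ) + j, -(g : ℤ))) ∪
  (Finset.range d).image (fun k : ℕ => ((g : ℤ) + p + k, -(g : ℤ) - 1 - k))

open Finset

theorem adj_iff {u v : ℤ × ℤ} :
    Adj u v ↔ (u.1 = v.1 ∧ (u.2 = v.2 + 1 ∨ v.2 = u.2 + 1)) ∨
      (u.2 = v.2 ∧ (u.1 = v.1 + 1 ∨ v.1 = u.1 + 1)) := by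
  obtain ⟨u1, u2⟩ := u
  obtain ⟨v1, v2⟩ := v
  constructor
  · intro h
    unfold Adj at h
    have h1 : (u1 - v1) ^ 2 ≤ 1 := by nlinarith [sq_nonneg (u2 - v2)]
    have h2 : (u2 - v2) ^ 2 ≤ 1 := by nlinarith [sq_nonneg (u1 - v1)]
    rw [sq_le_one_iff_abs_le_one, abs_le] at h1 h2
    obtain ⟨h1l, h1r⟩ := h1
    obtain ⟨h2l, h2r⟩ := h2
    interval_cases hx : u1 - v1 <;> interval_cases hy : u2 - v2 <;> simp_all <;> omega
  · rintro (⟨h1, h2 | h2⟩ | ⟨h1, h2 | h2⟩) <;> simp only at h1 h2 <;> simp [Adj, h1, h2]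

theorem adj_comm {u v : ℤ × ℤ} : Adj u v ↔ Adj v u := by
  rw [adj_iff, adj_iff]; omega

theorem infDiag_injective : Function.Injective infDiag := by
  rintro ⟨a1, a2⟩ ⟨b1, b2⟩ h
  simp only [infDiag, Sym2.eq_iff, Prod.ext_iff] at h ⊢
  omega

theorem supDiag_injective : Function.Injective supDiag := by
  rintro ⟨a1, a2⟩ ⟨b1, b2⟩ h
  simp only [supDiag, Sym2.eq_iff, Prod.ext_iff] at h ⊢
  omega

theorem infDiag_ne_supDiag (a b : ℤ × ℤ) : infDiag a ≠ supDiag b := by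
  intro h
  simp only [infDiag, supDiag, Sym2.eq_iff, Prod.ext_iff] at h
  omega

theorem supDiag_ne_infDiag (a b : ℤ × ℤ) : supDiag a ≠ infDiag b :=
  (infDiag_ne_supDiag b a).symm

def diagonals (C : Finset (ℤ × ℤ)) : Finset (Sym2 (ℤ × ℤ)) :=
  C.image infDiag ∪ C.image supDiag

theorem mem_diagonals {C : Finset (ℤ × ℤ)} {s : Sym2 (ℤ × ℤ)} :
    s ∈ diagonals C ↔ ∃ c ∈ C, s = infDiag c ∨ s = supDiag c := by
  simp only [diagonals, mem_union, mem_image]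
  constructor
  · rintro (⟨c, hc, rfl⟩ | ⟨c, hc, rfl⟩)
    exacts [⟨c, hc, .inl rfl⟩, ⟨c, hc, .inr rfl⟩]
  · rintro ⟨c, hc, rfl | rfl⟩
    exacts [.inl ⟨c, hc, rfl⟩, .inr ⟨c, hc, rfl⟩]

theorem card_diagonals (C : Finset (ℤ × ℤ)) : (diagonals C).card = 2 * C.card := by
  have hdisj : Disjoint (C.image infDiag) (C.image supDiag) := by
    simp only [disjoint_left, mem_image]
    rintro _ ⟨a, -, rfl⟩ ⟨b, -, h⟩
    exact infDiag_ne_supDiag a b h.symm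
  rw [diagonals, card_union_of_disjoint hdisj, card_image_of_injective _ infDiag_injective,
    card_image_of_injective _ supDiag_injective, two_mul]

theorem exists_cell_of_mem_diagonals {C : Finset (ℤ × ℤ)} {s : Sym2 (ℤ × ℤ)} {w : ℤ × ℤ}
    (hs : s ∈ diagonals C) (hw : w ∈ s) :
    ∃ c ∈ C, (s = infDiag c ∧ (w = c ∨ w = (c.1 + 1, c.2 + 1))) ∨
      (s = supDiag c ∧ (w = (c.1, c.2 + 1) ∨ w = (c.1 + 1, c.2))) := by
  obtain ⟨c, hc, rfl | rfl⟩ := mem_diagonals.1 hs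
  · exact ⟨c, hc, .inl ⟨rfl, Sym2.mem_iff.1 hw⟩⟩
  · exact ⟨c, hc, .inr ⟨rfl, Sym2.mem_iff.1 hw⟩⟩

/-- Uniqueness comes for free: the `2 * C.card` positions carry all `2 * C.card` distinct
diagonals. -/
theorem isEmbroidery_of_inf_before_sup {C : Finset (ℤ × ℤ)} {f : ℕ → (ℤ × ℤ) × (ℤ × ℤ)}
    (hpos : ∀ c ∈ C, ∃ i j, i < j ∧ j < 2 * C.card ∧
      diagOf (f i) = infDiag c ∧ diagOf (f j) = supDiag c)
    (hadj : ∀ i, i + 1 < 2 * C.card → Adj (f i).2 (f (i + 1)).1) :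
    IsEmbroidery C f := by
  classical
  set g := fun i => diagOf (f i)
  have hsub : diagonals C ⊆ (range (2 * C.card)).image g := by
    intro s hs
    obtain ⟨c, hc, rfl | rfl⟩ := mem_diagonals.1 hs <;>
      obtain ⟨i, j, hij, hj, hi, hj'⟩ := hpos c hc
    exacts [mem_image.2 ⟨i, mem_range.2 (by omega), hi⟩, mem_image.2 ⟨j, mem_range.2 hj, hj'⟩]
  have himage : (range (2 * C.card)).image g = diagonals C :=
    (eq_of_subset_of_card_le hsub (by
      rw [card_diagonals]; exact card_image_le.trans (card_range _).le)).symm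
  have hinj : Set.InjOn g (range (2 * C.card)) :=
    injOn_of_card_image_eq (by rw [himage, card_diagonals, card_range])
  have hinj' : ∀ {i j}, i < 2 * C.card → j < 2 * C.card → g i = g j → i = j :=
    fun hi hj h => hinj (by simpa using hi) (by simpa using hj) h
  refine ⟨fun i hi => mem_diagonals.1 ?_, fun c hc => ?_, fun c hc => ?_, ?_, hadj⟩
  · exact himage ▸ mem_image_of_mem g (mem_range.2 hi)
  · obtain ⟨i, j, hij, hj, hi, -⟩ := hpos c hc
    exact ⟨i, ⟨by omega, hi⟩, fun i' ⟨hi', h⟩ => hinj' hi' (by omega) (h.trans hi.symm)⟩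
  · obtain ⟨i, j, -, hj, -, hj'⟩ := hpos c hc
    exact ⟨j, ⟨hj, hj'⟩, fun j' ⟨hj'', h⟩ => hinj' hj'' hj (h.trans hj'.symm)⟩
  · intro c hc i' j' hi' hj' hinf hsup
    obtain ⟨i, j, hij, hj, hi, hj''⟩ := hpos c hc
    rw [hinj' hi' (by omega) (hinf.trans hi.symm), hinj' hj' hj (hsup.trans hj''.symm)]
    exact hij

namespace IsEmbroidery

variable {C : Finset (ℤ × ℤ)} {f : ℕ → (ℤ × ℤ) × (ℤ × ℤ)}

theorem diagOf_mem (hf : IsEmbroidery C f) {i : ℕ} (hi : i < 2 * C.card) :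
    diagOf (f i) ∈ diagonals C :=
  mem_diagonals.2 (hf.1 i hi)

theorem exists_infDiag (hf : IsEmbroidery C f) {c : ℤ × ℤ} (hc : c ∈ C) :
    ∃ i < 2 * C.card, diagOf (f i) = infDiag c :=
  (hf.2.1 c hc).exists.imp fun _ => id

theorem exists_supDiag (hf : IsEmbroidery C f) {c : ℤ × ℤ} (hc : c ∈ C) :
    ∃ i < 2 * C.card, diagOf (f i) = supDiag c :=
  (hf.2.2.1 c hc).exists.imp fun _ => id

theorem lt_of_infDiag_of_supDiag (hf : IsEmbroidery C f) {c : ℤ × ℤ} (hc : c ∈ C) {i j : ℕ}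
    (hi : i < 2 * C.card) (hj : j < 2 * C.card) (hfi : diagOf (f i) = infDiag c)
    (hfj : diagOf (f j) = supDiag c) : i < j :=
  hf.2.2.2.1 c hc i j hi hj hfi hfj

theorem eq_of_diagOf_eq (hf : IsEmbroidery C f) {i j : ℕ} (hi : i < 2 * C.card)
    (hj : j < 2 * C.card) (h : diagOf (f i) = diagOf (f j)) : i = j := by
  obtain ⟨c, hc, hic | hic⟩ := hf.1 i hi
  · exact (hf.2.1 c hc).unique ⟨hi, hic⟩ ⟨hj, h ▸ hic⟩
  · exact (hf.2.2.1 c hc).unique ⟨hi, hic⟩ ⟨hj, h ▸ hic⟩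

end IsEmbroidery

def CyclicAdj (m i j : ℕ) : Prop :=
  i + 1 = j ∨ j + 1 = i ∨ (i + 1 = m ∧ j = 0) ∨ (j + 1 = m ∧ i = 0)

theorem IsClosedEmbroidery.exists_adj {C : Finset (ℤ × ℤ)} {f : ℕ → (ℤ × ℤ) × (ℤ × ℤ)}
    (hf : IsClosedEmbroidery C f) {i j : ℕ} (hi : i < 2 * C.card) (hj : j < 2 * C.card)
    (hij : CyclicAdj (2 * C.card) i j) :
    ∃ u ∈ diagOf (f i), ∃ w ∈ diagOf (f j), Adj u w := by
  obtain ⟨⟨-, -, -, -, hadj⟩, hclose⟩ := hf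
  rcases hij with rfl | rfl | ⟨h, rfl⟩ | ⟨h, rfl⟩
  · exact ⟨_, Sym2.mem_mk_right _ _, _, Sym2.mem_mk_left _ _, hadj i hj⟩
  · exact ⟨_, Sym2.mem_mk_left _ _, _, Sym2.mem_mk_right _ _, adj_comm.1 (hadj j hi)⟩
  · obtain rfl : i = 2 * C.card - 1 := by omega
    exact ⟨_, Sym2.mem_mk_right _ _, _, Sym2.mem_mk_left _ _, hclose⟩
  · obtain rfl : j = 2 * C.card - 1 := by omega
    exact ⟨_, Sym2.mem_mk_left _ _, _, Sym2.mem_mk_right _ _, adj_comm.1 hclose⟩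

/-- `a`, `a'` stand for the positions of the inferior and superior diagonal of a cell `A`, and
likewise for `B` and `C`. -/
theorem false_of_cyclicAdj {m a a' b b' c c' : ℕ} (hm : 5 ≤ m) (ha' : a' < m)
    (haa' : a < a') (hbb' : b < b') (hcc' : c < c') (hca : c ≠ a) (hca' : c ≠ a') (hcb : c ≠ b)
    (hA' : ∀ j < m, CyclicAdj m a' j → j = a ∨ j = b)
    (hA : ∀ j < m, CyclicAdj m a j → j = a' ∨ j = b')
    (hB : ∀ j < m, CyclicAdj m b j → j = a' ∨ j = b' ∨ j = c') : False := by
  have h1 := hA' (a' - 1)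
  have h2 := hA' (a' + 1)
  have h3 := hA' 0
  have h4 := hA (a - 1)
  have h5 := hA (m - 1)
  have h6 := hA (a + 1)
  have h7 := hB (b + 1)
  unfold CyclicAdj at h1 h2 h3 h4 h5 h6 h7
  omega

theorem mem_stairLanding_one {p d : ℕ} {c : ℤ × ℤ} :
    c ∈ stairLanding 1 p d ↔ c = (0, 0) ∨ (∃ j < p, c = (1 + (j : ℤ), -1)) ∨
      ∃ k < d, c = (1 + p + (k : ℤ), -2 - (k : ℤ)) := by
  simp only [stairLanding, mem_union, mem_image, mem_range, Nat.lt_one_iff, Nat.cast_one]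
  constructor
  · rintro ((⟨i, rfl, rfl⟩ | ⟨j, hj, rfl⟩) | ⟨k, hk, rfl⟩)
    · simp
    · exact .inr (.inl ⟨j, hj, rfl⟩)
    · exact .inr (.inr ⟨k, hk, by ring_nf⟩)
  · rintro (rfl | ⟨j, hj, rfl⟩ | ⟨k, hk, rfl⟩)
    · simp
    · exact .inl (.inr ⟨j, hj, rfl⟩)
    · exact .inr ⟨k, hk, by ring_nf⟩

theorem card_stairLanding (g p d : ℕ) : (stairLanding g p d).card = g + p + d := by
  rw [stairLanding, card_union_of_disjoint, card_union_of_disjoint, card_image_of_injective,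
    card_image_of_injective, card_image_of_injective, card_range, card_range, card_range]
  all_goals first
    | intro a b h; simp only [Prod.ext_iff] at h; omega
    | simp only [disjoint_left, mem_union, mem_image, mem_range, Prod.ext_iff]; omega

def stairEmbroidery (p d : ℕ) (i : ℕ) : (ℤ × ℤ) × (ℤ × ℤ) :=
  if i < 2 * d then
    let k : ℤ := d - 1 - (i / 2 : ℕ)
    if i % 2 = 0 then ((2 + p + k, -1 - k), (1 + p + k, -2 - k))
    else ((2 + p + k, -2 - k), (1 + p + k, -1 - k))
  else if i < 2 * d + p then
    let j : ℤ := 2 * d + p - 1 - i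
    ((2 + j, 0), (1 + j, -1))
  else if i = 2 * d + p then ((2, -1), (1, 0))
  else if i = 2 * d + p + 1 then ((0, 0), (1, 1))
  else if i = 2 * d + p + 2 then ((0, 1), (1, 0))
  else
    let j : ℤ := i - (2 * d + p + 2)
    ((1 + j, 0), (2 + j, -1))

theorem stairEmbroidery_adj (p d i : ℕ) :
    Adj (stairEmbroidery p d i).2 (stairEmbroidery p d (i + 1)).1 := by
  unfold stairEmbroidery
  split_ifs <;> rw [adj_iff] <;> dsimp only <;> omega

section stairEmbroidery

variable {p d : ℕ}

theorem diagOf_stairEmbroidery_stair {k : ℕ} (hk : k < d) :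
    diagOf (stairEmbroidery p d (2 * (d - 1 - k))) = infDiag (1 + p + k, -2 - k) ∧
      diagOf (stairEmbroidery p d (2 * (d - 1 - k) + 1)) = supDiag (1 + p + k, -2 - k) := by
  -- a name for the truncated difference, which `omega` cannot read inside an integer cast
  generalize hi : 2 * (d - 1 - k) = i
  simp only [stairEmbroidery, diagOf, infDiag, supDiag]
  constructor <;> split_ifs <;> first | omega | (rw [Sym2.eq_iff]; grind)

theorem diagOf_stairEmbroidery_row {j : ℕ} (hj : j < p) :
    diagOf (stairEmbroidery p d (2 * d + p - 1 - j)) = infDiag (1 + j, -1) ∧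
      diagOf (stairEmbroidery p d (if j = 0 then 2 * d + p else 2 * d + p + 2 + j)) =
        supDiag (1 + j, -1) := by
  generalize hi : 2 * d + p - 1 - j = i
  simp only [stairEmbroidery, diagOf, infDiag, supDiag]
  constructor <;> split_ifs <;> first | omega | (rw [Sym2.eq_iff]; grind)

theorem diagOf_stairEmbroidery_corner :
    diagOf (stairEmbroidery p d (2 * d + p + 1)) = infDiag (0, 0) ∧
      diagOf (stairEmbroidery p d (2 * d + p + 2)) = supDiag (0, 0) := by
  simp only [stairEmbroidery, diagOf, infDiag, supDiag]
  constructor <;> split_ifs <;> first | omega | (rw [Sym2.eq_iff]; grind)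

end stairEmbroidery

theorem brodable_stairLanding_one (p d : ℕ) (hp : 1 ≤ p) : Brodable (stairLanding 1 p d) := by
  refine ⟨stairEmbroidery p d,
    isEmbroidery_of_inf_before_sup (fun c hc => ?_) (fun i _ => stairEmbroidery_adj p d i)⟩
  rw [card_stairLanding]
  rcases mem_stairLanding_one.1 hc with rfl | ⟨j, hj, rfl⟩ | ⟨k, hk, rfl⟩
  · exact ⟨_, _, by omega, by omega, diagOf_stairEmbroidery_corner⟩
  · exact ⟨_, _, by split_ifs <;> omega, by split_ifs <;> omega, diagOf_stairEmbroidery_row hj⟩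
  · exact ⟨_, _, by omega, by omega, diagOf_stairEmbroidery_stair hk⟩

section EndOfStaircase

variable {p d : ℕ} {s : Sym2 (ℤ × ℤ)} {u w : ℤ × ℤ}

theorem last_cells_mem_stairLanding_one (hp : 1 ≤ p) (hd : 2 ≤ d) :
    ((p + d : ℤ), (-1 - d : ℤ)) ∈ stairLanding 1 p d ∧
      ((p + d - 1 : ℤ), (-d : ℤ)) ∈ stairLanding 1 p d ∧
      ((p + d - 2 : ℤ), (1 - d : ℤ)) ∈ stairLanding 1 p d := by
  simp only [mem_stairLanding_one, Prod.ext_iff]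
  refine ⟨.inr (.inr ⟨d - 1, by omega, by omega, by omega⟩),
    .inr (.inr ⟨d - 2, by omega, by omega, by omega⟩), ?_⟩
  rcases (by omega : d = 2 ∨ 3 ≤ d) with rfl | h
  exacts [.inr (.inl ⟨p - 1, by omega, by omega, by omega⟩),
    .inr (.inr ⟨d - 3, by omega, by omega, by omega⟩)]

theorem eq_infDiag_of_adj_supDiag_last (hd : 2 ≤ d) (hs : s ∈ diagonals (stairLanding 1 p d))
    (hw : w ∈ s) (hu : u ∈ supDiag (p + d, -1 - d)) (hadj : Adj u w) :
    s = infDiag (p + d, -1 - d) ∨ s = infDiag (p + d - 1, -d) := by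
  obtain ⟨c, hc, ⟨rfl, hv⟩ | ⟨rfl, hv⟩⟩ := exists_cell_of_mem_diagonals hs hw <;>
  simp only [infDiag_injective.eq_iff, supDiag_ne_infDiag, or_self] <;>
  rcases mem_stairLanding_one.1 hc with rfl | ⟨j, hj, rfl⟩ | ⟨k, hk, rfl⟩ <;>
  rcases Sym2.mem_iff.1 hu with rfl | rfl <;>
  rw [adj_iff] at hadj <;> simp only [Prod.ext_iff] at hv hadj ⊢ <;> omega

theorem eq_supDiag_of_adj_infDiag_last (hd : 1 ≤ d) (hs : s ∈ diagonals (stairLanding 1 p d))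
    (hw : w ∈ s) (hu : u ∈ infDiag (p + d, -1 - d)) (hadj : Adj u w) :
    s = supDiag (p + d, -1 - d) ∨ s = supDiag (p + d - 1, -d) := by
  obtain ⟨c, hc, ⟨rfl, hv⟩ | ⟨rfl, hv⟩⟩ := exists_cell_of_mem_diagonals hs hw <;>
  simp only [supDiag_injective.eq_iff, infDiag_ne_supDiag, or_self] <;>
  rcases mem_stairLanding_one.1 hc with rfl | ⟨j, hj, rfl⟩ | ⟨k, hk, rfl⟩ <;>
  rcases Sym2.mem_iff.1 hu with rfl | rfl <;>
  rw [adj_iff] at hadj <;> simp only [Prod.ext_iff] at hv hadj ⊢ <;> omega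

theorem eq_supDiag_of_adj_infDiag_penultimate (hd : 2 ≤ d)
    (hs : s ∈ diagonals (stairLanding 1 p d)) (hw : w ∈ s)
    (hu : u ∈ infDiag (p + d - 1, -d)) (hadj : Adj u w) :
    s = supDiag (p + d, -1 - d) ∨ s = supDiag (p + d - 1, -d) ∨ s = supDiag (p + d - 2, 1 - d) := by
  obtain ⟨c, hc, ⟨rfl, hv⟩ | ⟨rfl, hv⟩⟩ := exists_cell_of_mem_diagonals hs hw <;>
  simp only [supDiag_injective.eq_iff, infDiag_ne_supDiag, or_self] <;>
  rcases mem_stairLanding_one.1 hc with rfl | ⟨j, hj, rfl⟩ | ⟨k, hk, rfl⟩ <;>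
  rcases Sym2.mem_iff.1 hu with rfl | rfl <;>
  rw [adj_iff] at hadj <;> simp only [Prod.ext_iff] at hv hadj ⊢ <;> omega

end EndOfStaircase

theorem not_stronglyBrodable_stairLanding_one (p d : ℕ) (hp : 1 ≤ p) (hd : 2 ≤ d) :
    ¬ StronglyBrodable (stairLanding 1 p d) := by
  rintro ⟨f, hf⟩
  have hm : 2 * (stairLanding 1 p d).card = 2 * (1 + p + d) := by rw [card_stairLanding]
  obtain ⟨hA, hB, hC⟩ := last_cells_mem_stairLanding_one hp hd
  obtain ⟨a, ha, hfa⟩ := hf.1.exists_infDiag hA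
  obtain ⟨a', ha', hfa'⟩ := hf.1.exists_supDiag hA
  obtain ⟨b, hb, hfb⟩ := hf.1.exists_infDiag hB
  obtain ⟨b', hb', hfb'⟩ := hf.1.exists_supDiag hB
  obtain ⟨c, hc, hfc⟩ := hf.1.exists_infDiag hC
  obtain ⟨c', hc', hfc'⟩ := hf.1.exists_supDiag hC
  refine false_of_cyclicAdj (m := 2 * (stairLanding 1 p d).card) (by omega) ha'
    (hf.1.lt_of_infDiag_of_supDiag hA ha ha' hfa hfa')
    (hf.1.lt_of_infDiag_of_supDiag hB hb hb' hfb hfb')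
    (hf.1.lt_of_infDiag_of_supDiag hC hc hc' hfc hfc') ?_ ?_ ?_ ?_ ?_ ?_
  · rintro rfl
    have := infDiag_injective (hfc.symm.trans hfa)
    simp only [Prod.ext_iff] at this
    omega
  · rintro rfl
    exact infDiag_ne_supDiag _ _ (hfc.symm.trans hfa')
  · rintro rfl
    have := infDiag_injective (hfc.symm.trans hfb)
    simp only [Prod.ext_iff] at this
    omega
  · intro j hj hadj
    obtain ⟨u, hu, w, hw, huw⟩ := hf.exists_adj ha' hj hadj
    rcases eq_infDiag_of_adj_supDiag_last hd (hf.1.diagOf_mem hj) hw (hfa' ▸ hu) huw with h | h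
    exacts [.inl (hf.1.eq_of_diagOf_eq hj ha (h.trans hfa.symm)),
      .inr (hf.1.eq_of_diagOf_eq hj hb (h.trans hfb.symm))]
  · intro j hj hadj
    obtain ⟨u, hu, w, hw, huw⟩ := hf.exists_adj ha hj hadj
    rcases eq_supDiag_of_adj_infDiag_last (by omega) (hf.1.diagOf_mem hj) hw (hfa ▸ hu) huw
      with h | h
    exacts [.inl (hf.1.eq_of_diagOf_eq hj ha' (h.trans hfa'.symm)),
      .inr (hf.1.eq_of_diagOf_eq hj hb' (h.trans hfb'.symm))]
  · intro j hj hadj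
    obtain ⟨u, hu, w, hw, huw⟩ := hf.exists_adj hb hj hadj
    rcases eq_supDiag_of_adj_infDiag_penultimate hd (hf.1.diagOf_mem hj) hw (hfb ▸ hu) huw
      with h | h | h
    exacts [.inl (hf.1.eq_of_diagOf_eq hj ha' (h.trans hfa'.symm)),
      .inr (.inl (hf.1.eq_of_diagOf_eq hj hb' (h.trans hfb'.symm))),
      .inr (.inr (hf.1.eq_of_diagOf_eq hj hc' (h.trans hfc'.symm)))]

/-- For `d ≥ 2` and `p ≥ 2`, the staircase with landing `E_{1,p,d}` is brodable but
not strongly brodable. -/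
theorem stairLanding_one_p_d (p d : ℕ) (hp : 2 ≤ p) (hd : 2 ≤ d) :
    Brodable (stairLanding 1 p d) ∧ ¬ StronglyBrodable (stairLanding 1 p d) :=
  ⟨brodable_stairLanding_one p d (by omega), not_stronglyBrodable_stairLanding_one p d (by omega) hd⟩
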